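/- Let H = L + W, with L the complete graph Laplacian on V vertices and W diagonal with a unique smallest entry at vertex m. Then the first excited eigenvector φ₁ satisfies φ₁(m)·φ₁(v) < 0 for all v ≠ m; i.e., the component at m has a sign opposite to all other components. -/

import Mathlib

/-!
Write `H = D - J` with `D = diag(V + W u)` and `J` the all-ones matrix. An eigenvector `φ` of `H`
for `λ` satisfies `φ u * (D u - λ) = ∑ φ`, so as soon as `∑ φ ≠ 0` the sign of `φ u * ∑ φ` is the
sign of `D u - λ`. It therefore suffices to place `λ₁` strictly between `D m` and every other
`D u`. The Rayleigh quotient at `e u` gives `λ₀ < D u`, so the ground state `φ₀` has no zero entry;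
at `φ₀ u • e m - φ₀ m • e u`, which is orthogonal to `φ₀`, it gives `λ₁ < D u` whenever
`D m < D u`. Finally `D m < λ₁`: equality would force `∑ φ₁ = 0` and then `φ₁ = 0`, while
`λ₁ < D m` would give `φ₀` and `φ₁` constant signs, contradicting their orthogonality.
-/

open Matrix

/-- The `i`-th smallest eigenvalue (with multiplicity) of a Hermitian matrix. -/
noncomputable def sortedEig {n : ℕ} {A : Matrix (Fin n) (Fin n) ℝ}
    (hA : A.IsHermitian) (i : Fin n) : ℝ :=
  hA.eigenvalues (Tuple.sort hA.eigenvalues i)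

/-- The combinatorial Laplacian of the complete graph on `V` vertices:
`L = V·I − J`, where `J` is the all-ones matrix. -/
def cgL (V : ℕ) : Matrix (Fin V) (Fin V) ℝ :=
  (V : ℝ) • (1 : Matrix (Fin V) (Fin V) ℝ) - Matrix.of (fun _ _ => (1 : ℝ))

namespace Matrix.IsHermitian

variable {n : Type*} [Fintype n] [DecidableEq n] {A : Matrix n n ℝ} (hA : A.IsHermitian)

theorem sum_dotProduct_eigenvectorBasis_mul (x y : n → ℝ) :
    ∑ i, (⇑(hA.eigenvectorBasis i) ⬝ᵥ x) * (⇑(hA.eigenvectorBasis i) ⬝ᵥ y) = x ⬝ᵥ y := by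
  have h := hA.eigenvectorBasis.sum_inner_mul_inner (WithLp.toLp 2 x) (WithLp.toLp 2 y)
  simp only [EuclideanSpace.inner_eq_star_dotProduct, star_trivial] at h
  simpa [dotProduct_comm] using h

theorem dotProduct_eigenvectorBasis_mulVec (i : n) (x : n → ℝ) :
    ⇑(hA.eigenvectorBasis i) ⬝ᵥ (A *ᵥ x) = hA.eigenvalues i * (⇑(hA.eigenvectorBasis i) ⬝ᵥ x) := by
  have hsymm : Aᵀ = A := (isHermitian_iff_isSymm.mp hA).eq
  calc ⇑(hA.eigenvectorBasis i) ⬝ᵥ (A *ᵥ x) = x ⬝ᵥ (Aᵀ *ᵥ ⇑(hA.eigenvectorBasis i)) :=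
        (dotProduct_transpose_mulVec _ _ _).symm
    _ = _ := by
      rw [hsymm, hA.mulVec_eigenvectorBasis, dotProduct_smul, smul_eq_mul, dotProduct_comm]

theorem mul_dotProduct_self_le {c : ℝ} (x : n → ℝ)
    (hc : ∀ i, ⇑(hA.eigenvectorBasis i) ⬝ᵥ x ≠ 0 → c ≤ hA.eigenvalues i) :
    c * (x ⬝ᵥ x) ≤ x ⬝ᵥ (A *ᵥ x) := by
  rw [← hA.sum_dotProduct_eigenvectorBasis_mul, ← hA.sum_dotProduct_eigenvectorBasis_mul,
    Finset.mul_sum]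
  refine Finset.sum_le_sum fun i _ => ?_
  rw [dotProduct_eigenvectorBasis_mulVec]
  by_cases hi : ⇑(hA.eigenvectorBasis i) ⬝ᵥ x = 0
  · simp [hi]
  · nlinarith [hc i hi, mul_self_nonneg (⇑(hA.eigenvectorBasis i) ⬝ᵥ x)]

end Matrix.IsHermitian

noncomputable def sortedEigvec {n : ℕ} {A : Matrix (Fin n) (Fin n) ℝ} (hA : A.IsHermitian)
    (i : Fin n) : Fin n → ℝ :=
  ⇑(hA.eigenvectorBasis (Tuple.sort hA.eigenvalues i))

section SortedSpectrum

variable {n : ℕ} {A : Matrix (Fin n) (Fin n) ℝ} (hA : A.IsHermitian)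

theorem mulVec_sortedEigvec (i : Fin n) :
    A *ᵥ sortedEigvec hA i = sortedEig hA i • sortedEigvec hA i :=
  hA.mulVec_eigenvectorBasis _

theorem sortedEigvec_dotProduct (i j : Fin n) :
    sortedEigvec hA i ⬝ᵥ sortedEigvec hA j = if i = j then 1 else 0 := by
  have h := orthonormal_iff_ite.mp hA.eigenvectorBasis.orthonormal
    (Tuple.sort hA.eigenvalues j) (Tuple.sort hA.eigenvalues i)
  simpa [sortedEigvec, EuclideanSpace.inner_eq_star_dotProduct, eq_comm] using h

theorem sortedEigvec_ne_zero (i : Fin n) : sortedEigvec hA i ≠ 0 := by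
  intro h
  simpa [h] using sortedEigvec_dotProduct hA i i

theorem sortedEig_mul_dotProduct_self_le (i : Fin n) (x : Fin n → ℝ)
    (hx : ∀ j < i, sortedEigvec hA j ⬝ᵥ x = 0) :
    sortedEig hA i * (x ⬝ᵥ x) ≤ x ⬝ᵥ (A *ᵥ x) := by
  refine hA.mul_dotProduct_self_le x fun k hk => ?_
  have hik : i ≤ (Tuple.sort hA.eigenvalues).symm k := by
    by_contra! hlt
    exact hk (by simpa [sortedEigvec] using hx _ hlt)
  simpa [sortedEig] using Tuple.monotone_sort hA.eigenvalues hik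

end SortedSpectrum

def diagSubOnes {ι : Type*} [DecidableEq ι] (d : ι → ℝ) : Matrix ι ι ℝ :=
  diagonal d - of fun _ _ => 1

theorem cgL_add_diagonal (V : ℕ) (W : Fin V → ℝ) :
    cgL V + diagonal W = diagSubOnes fun u => (V : ℝ) + W u := by
  ext u v
  by_cases huv : u = v <;> simp [cgL, diagSubOnes, one_apply, huv]
  ring

namespace diagSubOnes

variable {ι : Type*} [Fintype ι] [DecidableEq ι] {d : ι → ℝ}

theorem mulVec_apply (φ : ι → ℝ) (u : ι) :
    (diagSubOnes d *ᵥ φ) u = d u * φ u - ∑ v, φ v := by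
  rw [diagSubOnes, sub_mulVec, Pi.sub_apply, mulVec_diagonal]
  simp [mulVec, dotProduct]

theorem dotProduct_mulVec (x : ι → ℝ) :
    x ⬝ᵥ (diagSubOnes d *ᵥ x) = ∑ u, d u * x u ^ 2 - (∑ u, x u) ^ 2 := by
  simp only [dotProduct, mulVec_apply, mul_sub, Finset.sum_sub_distrib, ← Finset.sum_mul]
  congr 1
  · exact Finset.sum_congr rfl fun u _ => by ring
  · ring

variable {φ : ι → ℝ} {μ : ℝ}

theorem eigvec_mul_sub_eq_sum (hφ : diagSubOnes d *ᵥ φ = μ • φ) (u : ι) :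
    φ u * (d u - μ) = ∑ v, φ v := by
  have h := congrFun hφ u
  rw [mulVec_apply, Pi.smul_apply, smul_eq_mul] at h
  linarith

theorem eigvec_sum_ne_zero (hφ : diagSubOnes d *ᵥ φ = μ • φ) (hφ0 : φ ≠ 0)
    (hμ : {u | d u = μ}.Subsingleton) :
    ∑ v, φ v ≠ 0 := by
  intro hS
  have hsupp : ∀ u, d u ≠ μ → φ u = 0 := fun u hu =>
    (mul_eq_zero.mp ((eigvec_mul_sub_eq_sum hφ u).trans hS)).resolve_right (sub_ne_zero.mpr hu)
  obtain ⟨w, hw⟩ := Function.ne_iff.mp hφ0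
  have hdw : d w = μ := by_contra fun h => hw (hsupp w h)
  have hsingle : ∑ v, φ v = φ w := Finset.sum_eq_single w
    (fun v _ hvw => hsupp v fun hv => hvw (hμ hv hdw)) (by simp)
  exact hw (hsingle ▸ hS)

theorem eigvec_apply_ne_zero (hφ : diagSubOnes d *ᵥ φ = μ • φ) (hS : ∑ v, φ v ≠ 0) (u : ι) :
    φ u ≠ 0 :=
  left_ne_zero_of_mul ((eigvec_mul_sub_eq_sum hφ u).trans_ne hS)

theorem eigvec_mul_sum_eq (hφ : diagSubOnes d *ᵥ φ = μ • φ) (u : ι) :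
    φ u * ∑ v, φ v = φ u ^ 2 * (d u - μ) := by
  rw [← eigvec_mul_sub_eq_sum hφ u]
  ring

theorem eigvec_mul_sum_pos (hφ : diagSubOnes d *ᵥ φ = μ • φ) (hS : ∑ v, φ v ≠ 0) {u : ι}
    (hu : μ < d u) :
    0 < φ u * ∑ v, φ v := by
  rw [eigvec_mul_sum_eq hφ]
  exact mul_pos (sq_pos_of_ne_zero (eigvec_apply_ne_zero hφ hS u)) (sub_pos.mpr hu)

theorem eigvec_mul_sum_neg (hφ : diagSubOnes d *ᵥ φ = μ • φ) (hS : ∑ v, φ v ≠ 0) {u : ι}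
    (hu : d u < μ) : φ u * ∑ v, φ v < 0 := by
  rw [eigvec_mul_sum_eq hφ]
  exact mul_neg_of_pos_of_neg (sq_pos_of_ne_zero (eigvec_apply_ne_zero hφ hS u)) (sub_neg.mpr hu)

theorem eigvec_dotProduct_ne_zero {ψ : ι → ℝ} {ν : ℝ} (hφ : diagSubOnes d *ᵥ φ = μ • φ)
    (hψ : diagSubOnes d *ᵥ ψ = ν • ψ) (hφ0 : φ ≠ 0) (hψ0 : ψ ≠ 0) (hμ : ∀ u, μ < d u)
    (hν : ∀ u, ν < d u) : φ ⬝ᵥ ψ ≠ 0 := by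
  have hSφ := eigvec_sum_ne_zero hφ hφ0 fun u hu => ((hμ u).ne' hu).elim
  have hSψ := eigvec_sum_ne_zero hψ hψ0 fun u hu => ((hν u).ne' hu).elim
  obtain ⟨w, -⟩ := Function.ne_iff.mp hφ0
  have hpos : 0 < ∑ u, (φ u * ∑ v, φ v) * (ψ u * ∑ v, ψ v) :=
    Finset.sum_pos (fun u _ => mul_pos (eigvec_mul_sum_pos hφ hSφ (hμ u))
      (eigvec_mul_sum_pos hψ hSψ (hν u))) ⟨w, Finset.mem_univ w⟩
  have hfactor : ∑ u, (φ u * ∑ v, φ v) * (ψ u * ∑ v, ψ v)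
      = (φ ⬝ᵥ ψ) * ((∑ v, φ v) * ∑ v, ψ v) := by
    rw [dotProduct, Finset.sum_mul]
    exact Finset.sum_congr rfl fun u _ => by ring
  intro h
  rw [hfactor, h, zero_mul] at hpos
  exact hpos.false

theorem eigvec_apply_mul_apply_neg (hφ : diagSubOnes d *ᵥ φ = μ • φ) (hφ0 : φ ≠ 0) {m : ι}
    (hm : d m < μ) (hμ : ∀ u ≠ m, μ < d u) : ∀ v ≠ m, φ m * φ v < 0 := by
  intro v hv
  have hS : ∑ w, φ w ≠ 0 := eigvec_sum_ne_zero hφ hφ0 fun u hu => by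
    by_cases hum : u = m
    · exact (hm.ne (hum ▸ hu)).elim
    · exact ((hμ u hum).ne' hu).elim
  have hneg := mul_neg_of_neg_of_pos (eigvec_mul_sum_neg hφ hS hm)
    (eigvec_mul_sum_pos hφ hS (hμ v hv))
  have hSq : 0 < (∑ w, φ w) ^ 2 := sq_pos_of_ne_zero hS
  nlinarith

end diagSubOnes

section SpectrumOfDiagSubOnes

variable {n : ℕ} {d : Fin n → ℝ} (hA : (diagSubOnes d).IsHermitian)

theorem sortedEig_zero_lt (h0 : 0 < n) (u : Fin n) : sortedEig hA ⟨0, h0⟩ < d u := by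
  have h := sortedEig_mul_dotProduct_self_le hA ⟨0, h0⟩ (Pi.single u 1) fun j hj =>
    (Nat.not_lt_zero _ hj).elim
  rw [diagSubOnes.dotProduct_mulVec, Fintype.sum_eq_single u fun v hv => by simp [hv]] at h
  simp at h
  linarith

theorem sortedEigvec_zero_apply_ne_zero (h0 : 0 < n) (u : Fin n) :
    sortedEigvec hA ⟨0, h0⟩ u ≠ 0 :=
  diagSubOnes.eigvec_apply_ne_zero (mulVec_sortedEigvec hA _)
    (diagSubOnes.eigvec_sum_ne_zero (mulVec_sortedEigvec hA _) (sortedEigvec_ne_zero hA _)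
      fun w hw => ((sortedEig_zero_lt hA h0 w).ne' hw).elim) u

theorem sortedEig_one_lt (h1 : 1 < n) {m u : Fin n} (hmu : d m < d u) :
    sortedEig hA ⟨1, h1⟩ < d u := by
  have hum : u ≠ m := fun h => hmu.ne (h ▸ rfl)
  set φ₀ := sortedEigvec hA ⟨0, by omega⟩
  set a := φ₀ u
  set b := -φ₀ m
  set x : Fin n → ℝ := Pi.single m a + Pi.single u b
  have horth : φ₀ ⬝ᵥ x = 0 := by
    simp only [x, a, b, dotProduct_add, dotProduct_single]
    ring
  have hray := sortedEig_mul_dotProduct_self_le hA ⟨1, h1⟩ x fun j hj => by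
    rw [show j = ⟨0, by omega⟩ from Fin.ext (by simp [Fin.lt_def] at hj; omega)]
    exact horth
  have hxx : x ⬝ᵥ x = a ^ 2 + b ^ 2 := by
    simp [x, hum, sq]
  have hxAx : x ⬝ᵥ (diagSubOnes d *ᵥ x) = d m * a ^ 2 + d u * b ^ 2 - (a + b) ^ 2 := by
    rw [diagSubOnes.dotProduct_mulVec, Fintype.sum_eq_add m u hum.symm fun v hv => by
      simp [x, hv.1, hv.2]]
    simp [x, hum, hum.symm, Finset.sum_add_distrib]
  have ha : a ≠ 0 := sortedEigvec_zero_apply_ne_zero hA _ u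
  have hpos : 0 < a ^ 2 + b ^ 2 := by positivity
  rw [hxx, hxAx] at hray
  have hlt : sortedEig hA ⟨1, h1⟩ * (a ^ 2 + b ^ 2) < d u * (a ^ 2 + b ^ 2) := by
    nlinarith [sq_pos_of_ne_zero ha, sq_nonneg (a + b)]
  exact lt_of_mul_lt_mul_right hlt hpos.le

theorem lt_sortedEig_one (h1 : 1 < n) {m : Fin n} (hm : ∀ u ≠ m, d m < d u) :
    d m < sortedEig hA ⟨1, h1⟩ := by
  have hψ := mulVec_sortedEigvec hA ⟨1, h1⟩
  have hψ0 := sortedEigvec_ne_zero hA ⟨1, h1⟩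
  rcases lt_trichotomy (d m) (sortedEig hA ⟨1, h1⟩) with hlt | heq | hgt
  · exact hlt
  · have honly : ∀ u, d u = sortedEig hA ⟨1, h1⟩ → u = m := fun u hu =>
      by_contra fun h => (hm u h).ne (heq.trans hu.symm)
    have hS := diagSubOnes.eigvec_sum_ne_zero hψ hψ0 fun u hu w hw =>
      (honly u hu).trans (honly w hw).symm
    have hm0 := diagSubOnes.eigvec_mul_sub_eq_sum hψ m
    rw [heq, sub_self, mul_zero] at hm0
    exact (hS hm0.symm).elim
  · have hbelow : ∀ u, sortedEig hA ⟨1, h1⟩ < d u := fun u => by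
      rcases eq_or_ne u m with rfl | hu
      · exact hgt
      · exact hgt.trans (hm u hu)
    have hne := diagSubOnes.eigvec_dotProduct_ne_zero (mulVec_sortedEigvec hA ⟨0, by omega⟩) hψ
      (sortedEigvec_ne_zero hA _) hψ0 (sortedEig_zero_lt hA _) hbelow
    exact (hne (by simp [sortedEigvec_dotProduct])).elim

end SpectrumOfDiagSubOnes

/-- For `H = L + W` with `W` diagonal having a unique smallest entry at
`m`, any (nonzero) eigenvector `φ₁` of the first excited eigenvalue `λ₁` satisfies
`φ₁(m)·φ₁(v) < 0` for all `v ≠ m`. -/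
theorem first_excited_sign {V : ℕ} (hV : 2 ≤ V) (W : Fin V → ℝ) (m : Fin V)
    (hmin : ∀ u : Fin V, u ≠ m → W m < W u)
    (hH : (cgL V + Matrix.diagonal W).IsHermitian)
    (φ₁ : Fin V → ℝ) (hφ₁ : φ₁ ≠ 0)
    (hEig : (cgL V + Matrix.diagonal W).mulVec φ₁ = sortedEig hH ⟨1, by omega⟩ • φ₁) :
    ∀ v : Fin V, v ≠ m → φ₁ m * φ₁ v < 0 := by
  -- `hH` occurs in the type of `hEig`, so the matrix is generalized rather than rewritten.
  generalize hA : cgL V + diagonal W = A at hH hEig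
  rw [cgL_add_diagonal] at hA
  subst hA
  have hd : ∀ u ≠ m, (V : ℝ) + W m < V + W u := fun u hu => by linarith [hmin u hu]
  exact diagSubOnes.eigvec_apply_mul_apply_neg hEig hφ₁ (lt_sortedEig_one hH _ hd)
    fun u hu => sortedEig_one_lt hH _ (hd u hu)
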